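/- There exists ε > 0 such that for all real x with |x| < ε, F(1/6, 5/6; 4/3; x(x+2)^3 / (2x+1)^3) = (1 / (1 + x/2)) · (1+2x)^(1/2) · (1+x)^(1/3). -/

import Mathlib

open Real

/-- The Gauss hypergeometric series `F(a,b;c;z) = ∑ ((a)_n (b)_n / ((c)_n n!)) z^n`,
where `(q)_n` is the rising (Pochhammer) factorial. -/
noncomputable def hypgeo (a b c z : ℝ) : ℝ :=
  ∑' n : ℕ, ((∏ i ∈ Finset.range n, (a + i)) * (∏ i ∈ Finset.range n, (b + i)) /
    ((∏ i ∈ Finset.range n, (c + i)) * (Nat.factorial n))) * z ^ n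

/-!
Pulling the hypergeometric equation `y(1-y)F'' + (4/3 - 2y)F' - (5/36)F = 0` back along
`y = z(x) = x(x+2)³/(2x+1)³` gives a linear equation `A u'' + B u' + C u = 0` in `x`, solved by
`F(1/6, 5/6; 4/3; z(x))` and, by a direct computation with its logarithmic derivative, by the
algebraic right-hand side. Their Wronskian `W` satisfies `A W' + B W = 0`, hence
`W · z^{4/3} (1-z)^{2/3} / z'` is constant. Since `z(0) = 0` this constant is `0`, so `W ≡ 0`,
and the quotient of the two solutions is constant, equal to its value `1` at `x = 0`.
-/

theorem summable_succ_pow_mul_geometric (k : ℕ) {r : ℝ} (h₀ : 0 < r) (h₁ : r < 1) :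
    Summable fun n : ℕ => ((n : ℝ) + 1) ^ k * r ^ n := by
  have h := summable_pow_mul_geometric_of_norm_lt_one k (r := r) (by rwa [norm_of_nonneg h₀.le])
  refine ((summable_nat_add_iff 1).mpr (h.div_const r)).congr fun n => ?_
  push_cast
  field_simp
  ring

def derivCoeff (c : ℕ → ℝ) (n : ℕ) : ℝ := (n + 1) * c (n + 1)

section PowerSeries

variable {c : ℕ → ℝ} {C : ℝ} {k : ℕ}

theorem abs_derivCoeff_le (hc : ∀ n, |c n| ≤ C * ((n : ℝ) + 1) ^ k) (n : ℕ) :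
    |derivCoeff c n| ≤ 2 ^ k * C * ((n : ℝ) + 1) ^ (k + 1) := by
  have hC : 0 ≤ C := by simpa using (abs_nonneg _).trans (hc 0)
  rw [derivCoeff, abs_mul, abs_of_pos (by positivity)]
  calc ((n : ℝ) + 1) * |c (n + 1)| ≤ ((n : ℝ) + 1) * (C * (2 * ((n : ℝ) + 1)) ^ k) := by
        gcongr
        exact (hc (n + 1)).trans (by push_cast; gcongr; linarith)
    _ = 2 ^ k * C * ((n : ℝ) + 1) ^ (k + 1) := by rw [mul_pow]; ring

theorem summable_mul_pow (hc : ∀ n, |c n| ≤ C * ((n : ℝ) + 1) ^ k) {y : ℝ} (hy : |y| < 1) :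
    Summable fun n => c n * y ^ n := by
  obtain ⟨r, hyr, hr⟩ := exists_between hy
  refine .of_norm_bounded
    ((summable_succ_pow_mul_geometric k ((abs_nonneg y).trans_lt hyr) hr).mul_left C) fun n => ?_
  rw [norm_mul, norm_pow, norm_eq_abs, ← mul_assoc]
  exact mul_le_mul (hc n) (pow_le_pow_left₀ (abs_nonneg y) hyr.le n) (by positivity)
    ((abs_nonneg _).trans (hc n))

theorem hasDerivAt_tsum_mul_pow (hc : ∀ n, |c n| ≤ C * ((n : ℝ) + 1) ^ k) {y : ℝ}
    (hy : |y| < 1) :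
    HasDerivAt (fun z => ∑' n, c n * z ^ n) (∑' n, derivCoeff c n * y ^ n) y := by
  obtain ⟨r, hyr, hr⟩ := exists_between hy
  have hr₀ : 0 < r := (abs_nonneg y).trans_lt hyr
  have hu : Summable fun n : ℕ => |c n| * n * r ^ (n - 1) := by
    refine (summable_nat_add_iff 1).mp (.of_norm_bounded
      ((summable_succ_pow_mul_geometric (k + 1) hr₀ hr).mul_left (2 ^ k * C)) fun n => ?_)
    have := abs_derivCoeff_le hc n
    rw [derivCoeff, abs_mul, abs_of_pos (by positivity)] at this
    rw [norm_eq_abs, abs_of_nonneg (by positivity), ← mul_assoc, Nat.add_sub_cancel,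
      Nat.cast_succ, mul_comm |c _|]
    gcongr
  have hbound (n : ℕ) : ∀ z ∈ Set.Ioo (-r) r,
      ‖c n * (n * z ^ (n - 1))‖ ≤ |c n| * n * r ^ (n - 1) := fun z hz => by
    rw [norm_eq_abs, abs_mul, abs_mul, abs_pow, Nat.abs_cast, ← mul_assoc]
    gcongr
    exact (abs_lt.mpr hz).le
  have hderiv := hasDerivAt_tsum_of_isPreconnected hu isOpen_Ioo isPreconnected_Ioo
    (fun n z _ => (hasDerivAt_pow n z).const_mul (c n)) hbound
    (show (0 : ℝ) ∈ Set.Ioo (-r) r by constructor <;> linarith)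
    (summable_mul_pow hc (by simp)) (abs_lt.mp hyr)
  rw [(Summable.of_norm_bounded hu fun n => hbound n y (abs_lt.mp hyr)).tsum_eq_zero_add] at hderiv
  simpa [derivCoeff, mul_comm, mul_left_comm] using hderiv

end PowerSeries

theorem hasSum_mul_pow_of_hasSum_succ {f : ℕ → ℝ} (hf : f 0 = 0) {y s : ℝ}
    (h : HasSum (fun n => f (n + 1) * y ^ n) s) : HasSum (fun n => f n * y ^ n) (y * s) := by
  have h' := h.mul_left y
  rw [show (fun n => y * (f (n + 1) * y ^ n)) = fun n => f (n + 1) * y ^ (n + 1) from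
    funext fun n => by ring] at h'
  simpa [hf] using (hasSum_nat_add_iff (f := fun n => f n * y ^ n) 1).mp h'

noncomputable def hypgeoCoeff (a b c : ℝ) (n : ℕ) : ℝ :=
  (∏ i ∈ Finset.range n, (a + i)) * (∏ i ∈ Finset.range n, (b + i)) /
    ((∏ i ∈ Finset.range n, (c + i)) * (Nat.factorial n))

section Hypergeometric

variable {a b c : ℝ}

theorem hypgeo_eq_tsum (y : ℝ) : hypgeo a b c y = ∑' n, hypgeoCoeff a b c n * y ^ n := rfl

@[simp] theorem hypgeoCoeff_zero : hypgeoCoeff a b c 0 = 1 := by simp [hypgeoCoeff]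

theorem hypgeo_zero : hypgeo a b c 0 = 1 := by
  rw [hypgeo_eq_tsum, tsum_eq_single 0 fun n hn => by simp [hn]]
  simp

theorem hypgeoCoeff_succ (hc : ∀ n : ℕ, c + n ≠ 0) (n : ℕ) :
    hypgeoCoeff a b c (n + 1) =
      (a + n) * (b + n) / ((c + n) * (n + 1)) * hypgeoCoeff a b c n := by
  have hprod : ∏ i ∈ Finset.range n, (c + i) ≠ 0 := Finset.prod_ne_zero_iff.mpr fun i _ => hc i
  have := hc n
  simp only [hypgeoCoeff, Finset.prod_range_succ, Nat.factorial_succ, Nat.cast_mul]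
  field_simp
  push_cast
  ring

theorem hypgeoCoeff_mem_Icc (ha : 0 ≤ a) (hb : 0 ≤ b) (hc : 0 < c) (hab : a * b ≤ c)
    (hab' : a + b ≤ c + 1) (n : ℕ) : hypgeoCoeff a b c n ∈ Set.Icc 0 1 := by
  induction n with
  | zero => simp
  | succ n ih =>
    have hratio : (a + n) * (b + n) / ((c + n) * (n + 1)) ∈ Set.Icc 0 1 := by
      rw [Set.mem_Icc, div_le_one (by positivity)]
      exact ⟨by positivity, by nlinarith [(Nat.cast_nonneg n : (0 : ℝ) ≤ n)]⟩
    rw [hypgeoCoeff_succ fun n => by positivity]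
    exact ⟨mul_nonneg hratio.1 ih.1, mul_le_one₀ hratio.2 ih.1 ih.2⟩

theorem hypgeo_ode (hc : ∀ n : ℕ, c + n ≠ 0) {y F F' F'' : ℝ}
    (h : HasSum (fun n => hypgeoCoeff a b c n * y ^ n) F)
    (h' : HasSum (fun n => derivCoeff (hypgeoCoeff a b c) n * y ^ n) F')
    (h'' : HasSum (fun n => derivCoeff (derivCoeff (hypgeoCoeff a b c)) n * y ^ n) F'') :
    y * (1 - y) * F'' + (c - (a + b + 1) * y) * F' - a * b * F = 0 := by
  have hrec (n : ℕ) : (c + n) * (n + 1) * hypgeoCoeff a b c (n + 1) =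
      (a + n) * (b + n) * hypgeoCoeff a b c n := by
    rw [hypgeoCoeff_succ hc]
    have := hc n
    field_simp
  set p := hypgeoCoeff a b c
  have hyF'' : HasSum (fun n => (n + 1) * n * p (n + 1) * y ^ n) (y * F'') := by
    refine hasSum_mul_pow_of_hasSum_succ (f := fun n : ℕ => (n + 1) * n * p (n + 1)) (by simp) ?_
    convert h'' using 2 with n
    simp only [derivCoeff]
    push_cast
    ring
  -- `y F'' + c F'` and `y (y F'' + (a + b + 1) F') + a b F` both sum `∑ (a + n) (b + n) pₙ yⁿ`
  have hP : HasSum (fun n => (a + n) * (b + n) * p n * y ^ n) (y * F'' + c * F') := by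
    convert hyF''.add (h'.mul_left c) using 2 with n
    rw [← hrec, derivCoeff]
    ring
  have hQ : HasSum (fun n => n * (n + a + b) * p n * y ^ n)
      (y * (y * F'' + (a + b + 1) * F')) := by
    refine hasSum_mul_pow_of_hasSum_succ (f := fun n : ℕ => n * (n + a + b) * p n) (by simp) ?_
    convert hyF''.add (h'.mul_left (a + b + 1)) using 2 with n
    simp only [derivCoeff]
    push_cast
    ring
  have hP' : HasSum (fun n => (a + n) * (b + n) * p n * y ^ n)
      (y * (y * F'' + (a + b + 1) * F') + a * b * F) := by
    convert hQ.add (h.mul_left (a * b)) using 2 with n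
    ring
  linear_combination hP.unique hP'

end Hypergeometric

theorem eqOn_of_wronskian_eq_zero {s : Set ℝ} (hs : IsOpen s) (hs' : IsPreconnected s)
    {u v u' v' : ℝ → ℝ} (hu : ∀ x ∈ s, HasDerivAt u (u' x) x)
    (hv : ∀ x ∈ s, HasDerivAt v (v' x) x) (hv₀ : ∀ x ∈ s, v x ≠ 0)
    (hW : ∀ x ∈ s, u x * v' x - v x * u' x = 0) {x₀ : ℝ} (hx₀ : x₀ ∈ s) (h₀ : u x₀ = v x₀) :
    Set.EqOn u v s := by
  have hq : ∀ x ∈ s, HasDerivAt (fun x => u x / v x) 0 x := fun x hx => by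
    refine ((hu x hx).fun_div (hv x hx) (hv₀ x hx)).congr_deriv ?_
    rw [div_eq_zero_iff]
    left
    linear_combination -hW x hx
  intro x hx
  have := hs.is_const_of_deriv_eq_zero hs'
    (fun y hy => (hq y hy).differentiableAt.differentiableWithinAt) (fun y hy => (hq y hy).deriv)
    hx hx₀
  rwa [h₀, div_self (hv₀ x₀ hx₀), div_eq_one_iff_eq (hv₀ x hx)] at this

theorem pow_three_mul_eq_zero_of_hasDerivAt {s : Set ℝ} (hs : IsOpen s) (hs' : IsPreconnected s)
    {W W' E E' : ℝ → ℝ} (hW : ∀ x ∈ s, HasDerivAt W (W' x) x)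
    (hE : ∀ x ∈ s, HasDerivAt E (E' x) x) (hWE : ∀ x ∈ s, 3 * W' x * E x + W x * E' x = 0)
    {x₀ : ℝ} (hx₀ : x₀ ∈ s) (h₀ : E x₀ = 0) {x : ℝ} (hx : x ∈ s) : W x ^ 3 * E x = 0 := by
  have hV : ∀ x ∈ s, HasDerivAt (fun x => W x ^ 3 * E x) 0 x := fun x hx => by
    refine (((hW x hx).fun_pow 3).fun_mul (hE x hx)).congr_deriv ?_
    linear_combination W x ^ 2 * hWE x hx
  have := hs.is_const_of_deriv_eq_zero hs'
    (fun y hy => (hV y hy).differentiableAt.differentiableWithinAt) (fun y hy => (hV y hy).deriv)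
    hx hx₀
  simpa [h₀] using this

noncomputable section

namespace QuarticTransformation

local notation "𝕀" => Set.Ioo (-1/20 : ℝ) (1/20)

def z (x : ℝ) : ℝ := x * (x + 2) ^ 3 / (2 * x + 1) ^ 3
def z' (x : ℝ) : ℝ := 2 * (x + 2) ^ 2 * (x - 1) ^ 2 / (2 * x + 1) ^ 4
def z'' (x : ℝ) : ℝ := 36 * (x + 2) * (x - 1) / (2 * x + 1) ^ 5

def lhs (x : ℝ) : ℝ := hypgeo (1/6) (5/6) (4/3) (z x)
def rhs (x : ℝ) : ℝ :=
  1 / (1 + x / 2) * (1 + 2 * x) ^ ((1 : ℝ) / 2) * (1 + x) ^ ((1 : ℝ) / 3)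

def logDerivRhs (x : ℝ) : ℝ := (1 + 2 * x)⁻¹ + (3 * (1 + x))⁻¹ - (2 + x)⁻¹
def logDerivRhs' (x : ℝ) : ℝ := -2 / (1 + 2 * x) ^ 2 - 1 / (3 * (1 + x) ^ 2) + 1 / (2 + x) ^ 2
def rhs' (x : ℝ) : ℝ := rhs x * logDerivRhs x
def rhs'' (x : ℝ) : ℝ := rhs x * (logDerivRhs x ^ 2 + logDerivRhs' x)

-- The hypergeometric equation at `y = z x`, multiplied by `z'³`, as an equation for `u = F ∘ z`.
def odeA (x : ℝ) : ℝ := z x * (1 - z x) * z' x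
def odeB (x : ℝ) : ℝ := (4 / 3 - 2 * z x) * z' x ^ 2 - z x * (1 - z x) * z'' x
def odeC (x : ℝ) : ℝ := -(5 / 36) * z' x ^ 3

/- The integrating factor of `A W' + B W = 0` is `z^{4/3} (1-z)^{2/3} / z'`; its cube is rational,
which avoids fractional powers of the sign-changing `z`. -/
def integratingFactorCube (x : ℝ) : ℝ := z x ^ 4 * (1 - z x) ^ 2 / z' x ^ 3
def integratingFactorCube' (x : ℝ) : ℝ := 3 * odeB x * (z x ^ 3 * (1 - z x) / z' x ^ 4)

variable {x : ℝ}

theorem z'_pos (hx : x ∈ 𝕀) : 0 < z' x := by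
  obtain ⟨h₁, h₂⟩ := hx
  have h₃ : 0 < (x - 1) ^ 2 := by nlinarith
  have h₄ : 0 < (x + 2) ^ 2 := by nlinarith
  have h₅ : 0 < (2 * x + 1) ^ 4 := pow_pos (by linarith) 4
  unfold z'
  positivity

theorem abs_z_lt_one (hx : x ∈ 𝕀) : |z x| < 1 := by
  obtain ⟨h₁, h₂⟩ := hx
  have hd : 0 < (2 * x + 1) ^ 3 := pow_pos (by linarith) 3
  rw [z, abs_lt, lt_div_iff₀ hd, div_lt_one hd]
  constructor <;> nlinarith [mul_pos (sub_pos.2 h₁) (sub_pos.2 h₂)]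

theorem rhs_pos (hx : x ∈ 𝕀) : 0 < rhs x := by
  obtain ⟨h₁, h₂⟩ := hx
  exact mul_pos (mul_pos (one_div_pos.mpr (by linarith)) (rpow_pos_of_pos (by linarith) _))
    (rpow_pos_of_pos (by linarith) _)

theorem hasDerivAt_z (hx : 2 * x + 1 ≠ 0) : HasDerivAt z (z' x) x := by
  have h := ((hasDerivAt_id' x).fun_mul (((hasDerivAt_id' x).add_const 2).fun_pow 3)).fun_div
    ((((hasDerivAt_id' x).const_mul 2).add_const 1).fun_pow 3) (pow_ne_zero 3 hx)
  refine h.congr_deriv ?_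
  rw [z']
  norm_num
  field_simp
  ring

theorem hasDerivAt_z' (hx : 2 * x + 1 ≠ 0) : HasDerivAt z' (z'' x) x := by
  have h := ((((hasDerivAt_id' x).add_const 2).fun_pow 2).const_mul 2 |>.fun_mul
    (((hasDerivAt_id' x).sub_const 1).fun_pow 2)).fun_div
    ((((hasDerivAt_id' x).const_mul 2).add_const 1).fun_pow 4) (pow_ne_zero 4 hx)
  refine h.congr_deriv ?_
  rw [z'']
  field_simp
  ring

theorem hasDerivAt_logDerivRhs (hx : x ∈ 𝕀) : HasDerivAt logDerivRhs (logDerivRhs' x) x := by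
  obtain ⟨h₁, h₂⟩ := hx
  have h := ((((hasDerivAt_id' x).const_mul 2).const_add 1).fun_inv (by simp; linarith)).fun_add
    ((((hasDerivAt_id' x).const_add 1).const_mul 3).fun_inv (by simp; linarith)) |>.fun_sub
    (((hasDerivAt_id' x).const_add 2).fun_inv (by simp; linarith))
  refine h.congr_deriv ?_
  rw [logDerivRhs']
  field_simp
  ring

theorem hasDerivAt_rhs (hx : x ∈ 𝕀) : HasDerivAt rhs (rhs' x) x := by
  obtain ⟨h₁, h₂⟩ := hx
  have h12 : 0 < 1 + 2 * x := by linarith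
  have h1 : 0 < 1 + x := by linarith
  have hrecip := (hasDerivAt_const x (1 : ℝ)).fun_div
    (((hasDerivAt_id' x).div_const 2).const_add 1) (by linarith)
  have hsqrt := (((hasDerivAt_id' x).const_mul 2).const_add 1).rpow_const (p := 1 / 2)
    (.inl h12.ne')
  have hcbrt := ((hasDerivAt_id' x).const_add 1).rpow_const (p := 1 / 3) (.inl h1.ne')
  have : 1 + x * 2 ≠ 0 := by linarith
  have : 2 + x ≠ 0 := by linarith
  refine ((hrecip.fun_mul hsqrt).fun_mul hcbrt).congr_deriv ?_
  simp only [rhs', rhs, logDerivRhs, rpow_sub h12, rpow_sub h1, rpow_one]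
  field_simp
  ring

theorem hasDerivAt_rhs' (hx : x ∈ 𝕀) : HasDerivAt rhs' (rhs'' x) x := by
  refine ((hasDerivAt_rhs hx).fun_mul (hasDerivAt_logDerivRhs hx)).congr_deriv ?_
  simp only [rhs'', rhs']
  ring

theorem hasDerivAt_integratingFactorCube (hx : x ∈ 𝕀) :
    HasDerivAt integratingFactorCube (integratingFactorCube' x) x := by
  have h21 : 2 * x + 1 ≠ 0 := by linarith [hx.1]
  have hz' := (z'_pos hx).ne'
  have hz := hasDerivAt_z h21
  refine (((hz.fun_pow 4).fun_mul ((hz.const_sub 1).fun_pow 2)).fun_div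
    ((hasDerivAt_z' h21).fun_pow 3) (pow_ne_zero 3 hz')).congr_deriv ?_
  rw [integratingFactorCube', odeB]
  field_simp
  ring

def hypgeo' (y : ℝ) : ℝ := ∑' n, derivCoeff (hypgeoCoeff (1/6) (5/6) (4/3)) n * y ^ n
def hypgeo'' (y : ℝ) : ℝ :=
  ∑' n, derivCoeff (derivCoeff (hypgeoCoeff (1/6) (5/6) (4/3))) n * y ^ n

theorem abs_hypgeoCoeff_le (n : ℕ) :
    |hypgeoCoeff (1/6) (5/6) (4/3) n| ≤ 1 * ((n : ℝ) + 1) ^ 0 := by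
  obtain ⟨h₀, h₁⟩ := hypgeoCoeff_mem_Icc (a := 1/6) (b := 5/6) (c := 4/3) (by norm_num)
    (by norm_num) (by norm_num) (by norm_num) (by norm_num) n
  rw [abs_of_nonneg h₀]
  simpa using h₁

variable {y : ℝ}

theorem hasDerivAt_hypgeo (hy : |y| < 1) : HasDerivAt (hypgeo (1/6) (5/6) (4/3)) (hypgeo' y) y :=
  hasDerivAt_tsum_mul_pow abs_hypgeoCoeff_le hy

theorem hasDerivAt_hypgeo' (hy : |y| < 1) : HasDerivAt hypgeo' (hypgeo'' y) y :=
  hasDerivAt_tsum_mul_pow (abs_derivCoeff_le abs_hypgeoCoeff_le) hy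

theorem ode_hypgeo (hy : |y| < 1) :
    y * (1 - y) * hypgeo'' y + (4 / 3 - 2 * y) * hypgeo' y -
      5 / 36 * hypgeo (1/6) (5/6) (4/3) y = 0 := by
  have h := hypgeo_ode (a := 1/6) (b := 5/6) (c := 4/3) (fun n => by positivity)
    (summable_mul_pow abs_hypgeoCoeff_le hy).hasSum
    (summable_mul_pow (abs_derivCoeff_le abs_hypgeoCoeff_le) hy).hasSum
    (summable_mul_pow (abs_derivCoeff_le (abs_derivCoeff_le abs_hypgeoCoeff_le)) hy).hasSum
  rw [hypgeo_eq_tsum, hypgeo', hypgeo'']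
  linear_combination h

def lhs' (x : ℝ) : ℝ := hypgeo' (z x) * z' x
def lhs'' (x : ℝ) : ℝ := hypgeo'' (z x) * z' x ^ 2 + hypgeo' (z x) * z'' x

theorem hasDerivAt_lhs (hx : x ∈ 𝕀) : HasDerivAt lhs (lhs' x) x :=
  (hasDerivAt_hypgeo (abs_z_lt_one hx)).comp x (hasDerivAt_z (by linarith [hx.1]))

theorem hasDerivAt_lhs' (hx : x ∈ 𝕀) : HasDerivAt lhs' (lhs'' x) x := by
  have h21 : 2 * x + 1 ≠ 0 := by linarith [hx.1]
  refine (((hasDerivAt_hypgeo' (abs_z_lt_one hx)).comp x (hasDerivAt_z h21)).fun_mul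
    (hasDerivAt_z' h21)).congr_deriv ?_
  rw [lhs'', Function.comp_apply]
  ring

theorem ode_lhs (hx : x ∈ 𝕀) : odeA x * lhs'' x + odeB x * lhs' x + odeC x * lhs x = 0 := by
  rw [odeA, odeB, odeC, lhs, lhs', lhs'']
  linear_combination z' x ^ 3 * ode_hypgeo (abs_z_lt_one hx)

theorem ode_rhs (hx : x ∈ 𝕀) : odeA x * rhs'' x + odeB x * rhs' x + odeC x * rhs x = 0 := by
  obtain ⟨h₁, h₂⟩ := hx
  -- the denominators in the form `field_simp` normalizes them to
  have : x * 2 + 1 ≠ 0 := by linarith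
  have : 1 + x * 2 ≠ 0 := by linarith
  have : 1 + x ≠ 0 := by linarith
  have : 2 + x ≠ 0 := by linarith
  have key : odeA x * (logDerivRhs x ^ 2 + logDerivRhs' x) + odeB x * logDerivRhs x +
      odeC x = 0 := by
    unfold odeA odeB odeC z z' z'' logDerivRhs logDerivRhs'
    field_simp
    ring
  rw [rhs'', rhs']
  linear_combination rhs x * key

def wronskian (x : ℝ) : ℝ := lhs x * rhs' x - rhs x * lhs' x
def wronskian' (x : ℝ) : ℝ := lhs x * rhs'' x - rhs x * lhs'' x

theorem hasDerivAt_wronskian (hx : x ∈ 𝕀) : HasDerivAt wronskian (wronskian' x) x :=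
  (((hasDerivAt_lhs hx).fun_mul (hasDerivAt_rhs' hx)).fun_sub
    ((hasDerivAt_rhs hx).fun_mul (hasDerivAt_lhs' hx))).congr_deriv
    (by rw [wronskian', rhs']; ring)

theorem ode_wronskian (hx : x ∈ 𝕀) : odeA x * wronskian' x + odeB x * wronskian x = 0 := by
  rw [wronskian, wronskian']
  linear_combination lhs x * ode_rhs hx - rhs x * ode_lhs hx

theorem ode_wronskian_integratingFactorCube (hx : x ∈ 𝕀) :
    3 * wronskian' x * integratingFactorCube x + wronskian x * integratingFactorCube' x = 0 := by
  have hG : integratingFactorCube x = odeA x * (z x ^ 3 * (1 - z x) / z' x ^ 4) := by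
    rw [integratingFactorCube, odeA]
    field_simp [(z'_pos hx).ne']
  rw [hG, integratingFactorCube']
  linear_combination 3 * (z x ^ 3 * (1 - z x) / z' x ^ 4) * ode_wronskian hx

theorem wronskian_eq_zero (hx : x ∈ 𝕀) : wronskian x = 0 := by
  have hz' := (z'_pos hx).ne'
  have hz1 : 1 - z x ≠ 0 := by linarith [(abs_lt.mp (abs_z_lt_one hx)).2]
  rcases eq_or_ne (integratingFactorCube x) 0 with hE | hE
  · -- here `z x = 0`, so `A = 0` and `B = (4/3) z'² ≠ 0`
    have hz : z x = 0 := by simpa [integratingFactorCube, hz', hz1] using hE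
    have hB : odeB x ≠ 0 := by simp [odeB, hz, hz']
    simpa [odeA, hz, hB] using ode_wronskian hx
  · have h := pow_three_mul_eq_zero_of_hasDerivAt isOpen_Ioo isPreconnected_Ioo
      (fun _ hy => hasDerivAt_wronskian hy) (fun _ hy => hasDerivAt_integratingFactorCube hy)
      (fun _ hy => ode_wronskian_integratingFactorCube hy) (x₀ := 0)
      (by norm_num) (by simp [integratingFactorCube, z]) hx
    simpa [hE] using h

theorem lhs_eqOn_rhs : Set.EqOn lhs rhs 𝕀 :=
  eqOn_of_wronskian_eq_zero isOpen_Ioo isPreconnected_Ioo (fun _ hx => hasDerivAt_lhs hx)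
    (fun _ hx => hasDerivAt_rhs hx) (fun _ hx => (rhs_pos hx).ne')
    (fun _ hx => wronskian_eq_zero hx) (x₀ := 0) (by norm_num)
    (by simp [lhs, rhs, z, hypgeo_zero])

end QuarticTransformation

end

theorem stmt5 : ∃ ε > 0, ∀ x : ℝ, |x| < ε →
    hypgeo (1/6) (5/6) (4/3) (x * (x + 2)^3 / (2*x + 1)^3) =
      (1 / (1 + x/2)) * (1 + 2*x) ^ ((1 : ℝ)/2) * (1 + x) ^ ((1 : ℝ)/3) := by
  refine ⟨1/20, by norm_num, fun x hx => ?_⟩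
  obtain ⟨h₁, h₂⟩ := abs_lt.mp hx
  exact QuarticTransformation.lhs_eqOn_rhs ⟨by linarith, h₂⟩
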